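/- For every integer m ≥ 1, the map Φ1 defined on the vertex set of BDM(2,m) by Φ1((α,i)_β) = (α, −i−1)_{1−β} is an involutive automorphism of BDM(2,m) that interchanges the independent sets: Φ1 maps edges to edges and arcs to arcs (preserving orientation), Φ1∘Φ1 is the identity, and Φ1(V_0) = V_1 and Φ1(V_1) = V_0. -/
import Mathlib


/-- Vertices of `BDM(2,m)`: `(α, i)_β` is encoded as `(α, i, β)` with `α β : Bool`, `i : ZMod m`. -/
abbrev BDMVertex (m : ℕ) := Bool × ZMod m × Bool

/-- The unique out-neighbour (through an arc) of a vertex of `BDM(2,m)`. -/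
def bdmOut (m : ℕ) : BDMVertex m → BDMVertex m
  | (false, i, false) => (true, 2 * i, true)
  | (false, i, true) => (true, 2 * i + 1, false)
  | (true, i, false) => (false, -2 * i - 1, true)
  | (true, i, true) => (false, -2 * i - 2, false)

/-- The edges of `BDM(2,m)`: `(α,i)_0 ∼ (α,i)_1`. -/
def bdmEdge (m : ℕ) (u v : BDMVertex m) : Prop :=
  u.1 = v.1 ∧ u.2.1 = v.2.1 ∧ u.2.2 = !v.2.2

/-- The arcs of `BDM(2,m)`. -/
def bdmArc (m : ℕ) (u v : BDMVertex m) : Prop := v = bdmOut m u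

/-- One step in the associated digraph of `BDM(2,m)` (edge or arc). -/
def bdmStep (m : ℕ) (u v : BDMVertex m) : Prop := bdmEdge m u v ∨ bdmArc m u v

/-- `hasWalk step d u v` : there is a directed walk of length `d` from `u` to `v`. -/
def hasWalk {V : Type*} (step : V → V → Prop) : ℕ → V → V → Prop
  | 0, u, v => u = v
  | d + 1, u, v => ∃ w, step u w ∧ hasWalk step d w v

/-- The map $Φ_1((α,i)_β) = (α, -i-1)_{1-β}$. -/
def Phi1 (m : ℕ) : BDMVertex m → BDMVertex m :=
  fun u => (u.1, -u.2.1 - 1, !u.2.2)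

/-- $Φ_1$ is an involutive automorphism of $BDM(2,m)$ interchanging the independent sets:
it is a bijection mapping edges to edges and arcs to arcs (preserving orientation),
$Φ_1 ∘ Φ_1$ is the identity, and it sends $V_0$ to $V_1$ and vice versa. -/
theorem Phi1_involutive_automorphism (m : ℕ) (hm : 1 ≤ m) :
    Function.Bijective (Phi1 m) ∧
    (∀ u v : BDMVertex m, bdmEdge m u v ↔ bdmEdge m (Phi1 m u) (Phi1 m v)) ∧
    (∀ u v : BDMVertex m, bdmArc m u v ↔ bdmArc m (Phi1 m u) (Phi1 m v)) ∧
    (∀ u : BDMVertex m, Phi1 m (Phi1 m u) = u) ∧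
    (∀ u : BDMVertex m, (Phi1 m u).2.2 = !u.2.2) := by
  have hinv : ∀ u : BDMVertex m, Phi1 m (Phi1 m u) = u := by
    rintro ⟨a, i, b⟩
    simp [Phi1]
  refine ⟨Function.Involutive.bijective hinv, ?_, ?_, hinv, fun u => rfl⟩
  · rintro ⟨a, i, b⟩ ⟨c, j, d⟩
    simp only [bdmEdge, Phi1]
    constructor
    · rintro ⟨h1, h2, h3⟩
      refine ⟨h1, by rw [h2], by simp [h3]⟩
    · rintro ⟨h1, h2, h3⟩
      refine ⟨h1, by linear_combination -h2, by simpa using h3⟩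
  · have key : ∀ u v : BDMVertex m, bdmArc m u v → bdmArc m (Phi1 m u) (Phi1 m v) := by
      rintro ⟨a, i, b⟩ v h
      rw [bdmArc] at h; subst h
      rcases a <;> rcases b <;>
        simp only [bdmArc, Phi1, bdmOut, Bool.not_false, Bool.not_true, Prod.mk.injEq] <;>
        exact ⟨trivial, by ring, trivial⟩
    intro u v
    constructor
    · exact key u v
    · intro h
      have := key _ _ h
      rwa [hinv, hinv] at this
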